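/- arXiv:2404.16298 — 5 statements merged into one kernel-verified Lean document; each statement's English description precedes it below -/
import Mathlib

section
/- Let V : ℝ → ℝ be given by an everywhere-convergent power series, let f : ℝ → ℝ, and let (c_m)_{m≥0} be real constants such that for every nonnegative integer m and every real u, V^{(2m+1)}(u/2) = c_m · f(u). Suppose moreover that for every real v the series G(v) := Σ_{m=0}^∞ c_m · v^{2m+1} / (2^{2m} · (2m+1)!) converges absolutely. Then V is separable with divisors F = f and G, i.e. V((u+v)/2) − V((u−v)/2) = f(u)·G(v) for all real u, v. -/
/-!
An everywhere convergent power series has infinite radius of convergence, so `V` equals its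
Taylor series about `u / 2` at every point. Subtracting the expansions at `u / 2 ± v / 2`, the
even terms cancel and the odd ones double; by hypothesis the `(2m+1)`-st one is
`f u * c m * v ^ (2m+1) / (2 ^ (2m) * (2m+1)!)`, and `f u` factors out of the sum.
-/

open FormalMultilinearSeries Nat

variable {𝕜 : Type*} [RCLike 𝕜]

theorem FormalMultilinearSeries.ofScalars_radius_eq_top_of_forall_summable {a : ℕ → 𝕜}
    (ha : ∀ q : 𝕜, Summable fun n => a n * q ^ n) : (ofScalars 𝕜 a).radius = ⊤ := by
  refine ENNReal.eq_top_of_forall_nnreal_le fun r => le_radius_of_tendsto (l := 0) _ ?_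
  have h := (ha ((r : ℝ) : 𝕜)).tendsto_atTop_zero.norm
  simpa [ofScalars_norm] using h

theorem hasFPowerSeriesOnBall_ofScalars_of_forall_hasSum {V : 𝕜 → 𝕜} {a : ℕ → 𝕜}
    (hV : ∀ q : 𝕜, HasSum (fun n => a n * q ^ n) (V q)) :
    HasFPowerSeriesOnBall V (ofScalars 𝕜 a) 0 ⊤ where
  r_le := (ofScalars_radius_eq_top_of_forall_summable fun q => (hV q).summable).ge
  r_pos := ENNReal.zero_lt_top
  hasSum {y} _ := by simpa [ofScalars_apply_eq, smul_eq_mul, mul_comm] using hV y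

theorem HasFPowerSeriesOnBall.hasSum_iteratedDeriv {F : Type*} [NormedAddCommGroup F]
    [NormedSpace 𝕜 F] [CompleteSpace F] {f : 𝕜 → F} {p : FormalMultilinearSeries 𝕜 𝕜 F}
    {x y : 𝕜} {r : ENNReal} (h : HasFPowerSeriesOnBall f p x r) (hy : y ∈ Metric.eball 0 r) :
    HasSum (fun n => ((n ! : 𝕜)⁻¹ * y ^ n) • iteratedDeriv n f x) (f (x + y)) := by
  simpa [iteratedFDeriv_apply_eq_iteratedDeriv_mul_prod, smul_smul] using
    h.hasSum_iteratedFDeriv hy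

theorem hasSum_taylorSeries_of_forall_hasSum {V : 𝕜 → 𝕜} {a : ℕ → 𝕜}
    (hV : ∀ q : 𝕜, HasSum (fun n => a n * q ^ n) (V q)) (x y : 𝕜) :
    HasSum (fun n => (n ! : 𝕜)⁻¹ * iteratedDeriv n V x * y ^ n) (V (x + y)) := by
  have h := (hasFPowerSeriesOnBall_ofScalars_of_forall_hasSum hV).changeOrigin
    (y := x) ENNReal.coe_lt_top
  rw [zero_add, ENNReal.top_sub_coe] at h
  refine (h.hasSum_iteratedDeriv (y := y) (by simp)).congr_fun fun n => ?_
  rw [smul_eq_mul]; ring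

theorem HasSum.pow_sub_neg_pow_odd {R : Type*} [CommRing R] [TopologicalSpace R]
    [IsTopologicalAddGroup R] {b : ℕ → R} {y A B : R}
    (hA : HasSum (fun n => b n * y ^ n) A) (hB : HasSum (fun n => b n * (-y) ^ n) B) :
    HasSum (fun m => 2 * b (2 * m + 1) * y ^ (2 * m + 1)) (A - B) := by
  have hinj : Function.Injective fun m : ℕ => 2 * m + 1 := fun m₁ m₂ h => by simp only at h; omega
  refine ((hinj.hasSum_iff fun n hn => ?_).2 (hA.sub hB)).congr_fun fun m => ?_
  · obtain ⟨k, rfl⟩ := Nat.not_odd_iff_even.1 fun ⟨m, hm⟩ => hn ⟨m, hm.symm⟩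
    simp [Even.neg_pow ⟨k, rfl⟩]
  · simp only [Function.comp_apply, Odd.neg_pow ⟨m, rfl⟩, mul_neg, sub_neg_eq_add]
    ring

theorem stmt5_general (V f G : ℝ → ℝ) (a c : ℕ → ℝ)
    (hV : ∀ q : ℝ, HasSum (fun n : ℕ => a n * q ^ n) (V q))
    (hderiv : ∀ (m : ℕ) (u : ℝ), deriv^[2 * m + 1] V (u / 2) = c m * f u)
    (hG : ∀ v : ℝ, G v = ∑' m : ℕ,
      c m * v ^ (2 * m + 1) / (2 ^ (2 * m) * ((2 * m + 1).factorial : ℝ))) :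
    ∀ u v : ℝ, V ((u + v) / 2) - V ((u - v) / 2) = f u * G v := by
  intro u v
  have hodd := (hasSum_taylorSeries_of_forall_hasSum hV (u / 2) (v / 2)).pow_sub_neg_pow_odd
    (hasSum_taylorSeries_of_forall_hasSum hV (u / 2) (-(v / 2)))
  rw [← add_div, ← sub_eq_add_neg, ← sub_div] at hodd
  rw [hG, ← tsum_mul_left, ← hodd.tsum_eq]
  congr 1 with m
  rw [iteratedDeriv_eq_iterate, hderiv, div_pow, pow_succ 2]
  field_simp

theorem stmt5 (V f G : ℝ → ℝ) (a c : ℕ → ℝ)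
    (hV : ∀ q : ℝ, HasSum (fun n : ℕ => a n * q ^ n) (V q))
    (hderiv : ∀ (m : ℕ) (u : ℝ), deriv^[2 * m + 1] V (u / 2) = c m * f u)
    (habs : ∀ v : ℝ, Summable (fun m : ℕ =>
      |c m * v ^ (2 * m + 1) / (2 ^ (2 * m) * ((2 * m + 1).factorial : ℝ))|))
    (hG : ∀ v : ℝ, G v = ∑' m : ℕ,
      c m * v ^ (2 * m + 1) / (2 ^ (2 * m) * ((2 * m + 1).factorial : ℝ))) :
    ∀ u v : ℝ, V ((u + v) / 2) - V ((u - v) / 2) = f u * G v :=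
  stmt5_general V f G a c hV hderiv hG
end

section
/- Let f, g : ℝ → ℝ be continuous, let a be a real number, and define recursively I₀(x) = ∫_a^x f(t) dt and I_k(x) = ∫_a^x g(s)·I_{k−1}(s) ds for k ≥ 1. Then for every nonnegative integer n and every real x, the n-fold iterated integral satisfies I_n(x) = (1/n!) · ∫_a^x f(t) · (∫_t^x g(y) dy)^n dt. -/
/-!
Write `G` for the primitive of `g` vanishing at `a`, so that `∫_t^x g = G x - G t`, and put
`Φₙ[h](x) = ∫_a^x h(t) (G x - G t)ⁿ dt`. Splitting off one factor `G x - G t` gives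
`Φₙ₊₁[h] = G · Φₙ[h] - Φₙ[h G]`, and induction on `n` (for all `h` at once) yields
`Φₙ₊₁[h]' = (n + 1) g Φₙ[h]`. Since `Φₙ₊₁[h](a) = 0`, this says
`∫_a^x g Φₙ[f] = Φₙ₊₁[f](x) / (n + 1)`, which is exactly the recursion defining `Iₙ = Φₙ[f] / n!`.
-/

open intervalIntegral

noncomputable def kernelPowIntegral (h u : ℝ → ℝ) (a : ℝ) (n : ℕ) (x : ℝ) : ℝ :=
  ∫ t in a..x, h t * (u x - u t) ^ n

namespace kernelPowIntegral

variable {h u u' : ℝ → ℝ} {a : ℝ}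

theorem zero_eq (h u : ℝ → ℝ) (a : ℝ) :
    kernelPowIntegral h u a 0 = fun x => ∫ t in a..x, h t := by
  funext x
  simp only [kernelPowIntegral, pow_zero, mul_one]

theorem apply_self (h u : ℝ → ℝ) (a : ℝ) (n : ℕ) : kernelPowIntegral h u a n a = 0 :=
  integral_same

theorem succ_eq (hh : Continuous h) (hu : Continuous u) (n : ℕ) (x : ℝ) :
    kernelPowIntegral h u a (n + 1) x =
      u x * kernelPowIntegral h u a n x - kernelPowIntegral (h * u) u a n x := by
  have split : ∀ t, h t * (u x - u t) ^ (n + 1) =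
      u x * (h t * (u x - u t) ^ n) - (h * u) t * (u x - u t) ^ n := fun t => by
    simp only [Pi.mul_apply]; ring
  simp only [kernelPowIntegral, split]
  rw [integral_sub ((by fun_prop : Continuous _).intervalIntegrable _ _)
    ((by fun_prop : Continuous _).intervalIntegrable _ _), integral_const_mul]

theorem hasDerivAt_zero (hh : Continuous h) (x : ℝ) :
    HasDerivAt (kernelPowIntegral h u a 0) (h x) x := by
  rw [zero_eq]
  exact (hh.integral_hasStrictDerivAt a x).hasDerivAt

theorem hasDerivAt_succ_of_hasDerivAt (hh : Continuous h) (hu_cont : Continuous u) {n : ℕ}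
    {x D D' : ℝ} (hux : HasDerivAt u (u' x) x) (hD : HasDerivAt (kernelPowIntegral h u a n) D x)
    (hD' : HasDerivAt (kernelPowIntegral (h * u) u a n) D' x) :
    HasDerivAt (kernelPowIntegral h u a (n + 1)) (u' x * kernelPowIntegral h u a n x + u x * D - D')
      x := by
  rw [funext (succ_eq hh hu_cont n)]
  exact (hux.mul hD).sub hD'

theorem hasDerivAt_succ (hh : Continuous h) (hu : ∀ x, HasDerivAt u (u' x) x) (n : ℕ)
    (x : ℝ) :
    HasDerivAt (kernelPowIntegral h u a (n + 1))
      ((n + 1) * u' x * kernelPowIntegral h u a n x) x := by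
  have hu_cont : Continuous u := continuous_iff_continuousAt.2 fun x => (hu x).continuousAt
  induction n generalizing h with
  | zero =>
    refine (hasDerivAt_succ_of_hasDerivAt hh hu_cont (hu x) (hasDerivAt_zero hh x)
      (hasDerivAt_zero (hh.mul hu_cont) x)).congr_deriv ?_
    simp only [Pi.mul_apply]; ring
  | succ n ih =>
    refine (hasDerivAt_succ_of_hasDerivAt hh hu_cont (hu x) (ih hh)
      (ih (hh.mul hu_cont))).congr_deriv ?_
    rw [succ_eq hh hu_cont n x]; push_cast; ring

theorem integral_deriv_mul (hh : Continuous h) (hu : ∀ x, HasDerivAt u (u' x) x)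
    (hu' : Continuous u') (n : ℕ) (x : ℝ) :
    (n + 1) * ∫ s in a..x, u' s * kernelPowIntegral h u a n s =
      kernelPowIntegral h u a (n + 1) x := by
  have hΦ_cont : Continuous (kernelPowIntegral h u a n) := by
    cases n with
    | zero => exact continuous_iff_continuousAt.2 fun x => (hasDerivAt_zero hh x).continuousAt
    | succ n => exact continuous_iff_continuousAt.2 fun x => (hasDerivAt_succ hh hu n x).continuousAt
  rw [← integral_const_mul, integral_eq_sub_of_hasDerivAt
    (fun s _ => by simpa only [mul_assoc] using hasDerivAt_succ hh hu n s)
    ((by fun_prop : Continuous _).intervalIntegrable _ _),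
    apply_self, sub_zero]

end kernelPowIntegral

theorem stmt6 (f g : ℝ → ℝ) (hf : Continuous f) (hg : Continuous g) (a : ℝ)
    (I : ℕ → ℝ → ℝ)
    (hI0 : ∀ x : ℝ, I 0 x = ∫ t in a..x, f t)
    (hIk : ∀ (k : ℕ) (x : ℝ), I (k + 1) x = ∫ s in a..x, g s * I k s) :
    ∀ (n : ℕ) (x : ℝ),
      I n x = (1 / (n.factorial : ℝ)) * ∫ t in a..x, f t * (∫ y in t..x, g y) ^ n := by
  set G : ℝ → ℝ := fun x => ∫ y in a..x, g y
  have hG : ∀ x, HasDerivAt G (g x) x := fun x => (hg.integral_hasStrictDerivAt a x).hasDerivAt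
  have hG_sub : ∀ t x, ∫ y in t..x, g y = G x - G t := fun t x =>
    (integral_interval_sub_left (hg.intervalIntegrable a x) (hg.intervalIntegrable a t)).symm
  simp only [hG_sub]
  change ∀ n x, I n x = 1 / (n.factorial : ℝ) * kernelPowIntegral f G a n x
  intro n
  induction n with
  | zero => intro x; simp [hI0, kernelPowIntegral.zero_eq]
  | succ n ih =>
    intro x
    rw [hIk, ← kernelPowIntegral.integral_deriv_mul hf hG hg, Nat.factorial_succ]
    simp only [ih, mul_left_comm (g _), integral_const_mul]
    push_cast
    field_simp
end

section
/- Let μ > 0 and ℏ > 0 be real constants and let F, G : ℝ → ℝ be continuous. Define recursively S⁰(u,v) = u/4 and Sⁿ(u,v) = u/4 + (μ/(2ℏ²)) ∫_0^u F(u') (∫_0^v G(v')·S^{n−1}(u',v') dv') du' for n ≥ 1. Then for every n ≥ 1 and all real u, v: Sⁿ(u,v) = u/4 + Σ_{k=1}^{n} (μ/(2ℏ²))^k · (1/((k−1)!)²) · (∫_0^v G(v')·G̃(v,v')^{k−1} dv') · (∫_0^u F(u')·(u'/4)·F̃(u,u')^{k−1} du'), where F̃(u,u') = ∫_{u'}^{u}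 F(s) ds and G̃(v,v') = ∫_{v'}^{v} G(s) ds. -/
/-!
Unwinding the recursion gives `Sⁿ(u,v) = ∑_{k ≤ n} cᵏ Aₖ(u) Bₖ(v)` with `c = μ/(2ℏ²)`, where `Aₖ`
and `Bₖ` are the `k`-fold iterated primitives `A ↦ ∫₀ᵘ F A` starting from `u/4` and
`B ↦ ∫₀ᵛ G B` starting from `1`: the double integral of a separable function factorises, so each
step of the recursion just integrates the `u`- and `v`-factors separately. Cauchy's formula for
repeated integration, `A_{k+1}(u) = (1/k!) ∫₀ᵘ F(w) A₀(w) F̃(u,w)ᵏ dw`, turns this into the closed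
form. It is proved by induction, differentiating under the integral sign; since
`F̃(u,w)ᵏ = (P u - P w)ᵏ` with `P` a primitive of `F` is a polynomial in `P u`, the Leibniz rule is
only needed for separable kernels.
-/

open Finset intervalIntegral

section SeparableKernel

variable {ι : Type*} (s : Finset ι) {φ : ℝ → ℝ} {b : ι → ℝ → ℝ}

theorem integral_mul_sum_mul (hφ : Continuous φ) (hb : ∀ j ∈ s, Continuous (b j))
    (c : ι → ℝ) (x : ℝ) :
    ∫ w in (0:ℝ)..x, φ w * ∑ j ∈ s, c j * b j w
      = ∑ j ∈ s, c j * ∫ w in (0:ℝ)..x, φ w * b j w := by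
  simp_rw [mul_sum, mul_left_comm (φ _)]
  rw [integral_finsetSum fun j hj => ?_]
  · simp_rw [integral_const_mul]
  · exact (continuous_const.mul (hφ.mul (hb j hj))).intervalIntegrable _ _

theorem hasDerivAt_integral_of_separable {K : ℝ → ℝ → ℝ} {K' : ℝ → ℝ} {a : ι → ℝ → ℝ} {u : ℝ}
    (hK : ∀ x w, K x w = ∑ j ∈ s, a j x * b j w) (hφ : Continuous φ)
    (hb : ∀ j ∈ s, Continuous (b j)) (ha : ∀ j ∈ s, DifferentiableAt ℝ (a j) u)
    (hK' : ∀ w, HasDerivAt (K · w) (K' w) u) :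
    HasDerivAt (fun x => ∫ w in (0:ℝ)..x, φ w * K x w)
      (φ u * K u u + ∫ w in (0:ℝ)..u, φ w * K' w) u := by
  have hK'_eq : ∀ w, K' w = ∑ j ∈ s, deriv (a j) u * b j w := fun w =>
    (hK' w).unique <| by
      simp_rw [hK]
      exact HasDerivAt.fun_sum fun j hj => (ha j hj).hasDerivAt.mul_const _
  have hm : ∀ j ∈ s, HasDerivAt (fun x => ∫ w in (0:ℝ)..x, φ w * b j w) (φ u * b j u) u :=
    fun j hj => ((hφ.mul (hb j hj)).integral_hasStrictDerivAt 0 u).hasDerivAt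
  simp_rw [hK, hK'_eq, integral_mul_sum_mul s hφ hb]
  refine (HasDerivAt.fun_sum fun j hj => (ha j hj).hasDerivAt.mul (hm j hj)).congr_deriv ?_
  rw [mul_sum, ← sum_add_distrib]
  exact sum_congr rfl fun j _ => by ring

theorem integral_mul_integral_mul_sum_mul {f g : ℝ → ℝ} {α β : ι → ℝ → ℝ}
    (hf : Continuous f) (hg : Continuous g)
    (hα : ∀ k ∈ s, Continuous (α k)) (hβ : ∀ k ∈ s, Continuous (β k)) (u v : ℝ) :
    ∫ x in (0:ℝ)..u, f x * ∫ y in (0:ℝ)..v, g y * ∑ k ∈ s, α k x * β k y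
      = ∑ k ∈ s, (∫ x in (0:ℝ)..u, f x * α k x) * ∫ y in (0:ℝ)..v, g y * β k y := by
  simp_rw [integral_mul_sum_mul s hg hβ, mul_comm (α _ _)]
  rw [integral_mul_sum_mul s hf hα]
  simp_rw [mul_comm]

end SeparableKernel

section PowerKernel

variable {P f φ : ℝ → ℝ}

theorem hasDerivAt_integral_mul_sub_pow (hP : ∀ x, HasDerivAt P (f x) x) (hφ : Continuous φ)
    (n : ℕ) (u : ℝ) :
    HasDerivAt (fun x => ∫ w in (0:ℝ)..x, φ w * (P x - P w) ^ n)
      (φ u * 0 ^ n + ∫ w in (0:ℝ)..u, φ w * (n * (P u - P w) ^ (n - 1) * f u)) u := by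
  have hPc : Continuous P := continuous_iff_continuousAt.2 fun x => (hP x).continuousAt
  simpa using hasDerivAt_integral_of_separable (range (n + 1)) (K := fun x w => (P x - P w) ^ n)
    (a := fun j x => P x ^ j) (b := fun j w => (-P w) ^ (n - j) * n.choose j)
    (fun x w => by simp only [sub_eq_add_neg, add_pow, mul_assoc]) hφ (fun j _ => by fun_prop)
    (fun j _ => (hP u).differentiableAt.pow j) (fun w => ((hP u).sub_const (P w)).pow n)

theorem integral_mul_integral_mul_sub_pow (hP : ∀ x, HasDerivAt P (f x) x) (hf : Continuous f)
    (hφ : Continuous φ) (k : ℕ) (u : ℝ) :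
    ∫ x in (0:ℝ)..u, f x * ∫ w in (0:ℝ)..x, φ w * (P x - P w) ^ k
      = (∫ w in (0:ℝ)..u, φ w * (P u - P w) ^ (k + 1)) / (k + 1) := by
  have hM : Continuous fun x => ∫ w in (0:ℝ)..x, φ w * (P x - P w) ^ k :=
    continuous_iff_continuousAt.2 fun x => (hasDerivAt_integral_mul_sub_pow hP hφ k x).continuousAt
  have hderiv : ∀ x ∈ Set.uIcc 0 u, HasDerivAt
      (fun x => (∫ w in (0:ℝ)..x, φ w * (P x - P w) ^ (k + 1)) / (k + 1))
      (f x * ∫ w in (0:ℝ)..x, φ w * (P x - P w) ^ k) x := by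
    intro x _
    refine ((hasDerivAt_integral_mul_sub_pow hP hφ (k + 1) x).div_const _).congr_deriv ?_
    have hpull : ∀ w, φ w * (((k + 1 : ℕ) : ℝ) * (P x - P w) ^ (k + 1 - 1) * f x)
        = ((k + 1 : ℕ) * f x) * (φ w * (P x - P w) ^ k) := fun w => by
      rw [Nat.add_sub_cancel]; ring
    simp_rw [zero_pow k.succ_ne_zero, mul_zero, zero_add, hpull, integral_const_mul]
    push_cast
    field_simp
  rw [integral_eq_sub_of_hasDerivAt hderiv ((hf.mul hM).intervalIntegrable _ _)]
  simp

end PowerKernel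

noncomputable def iteratedPrimitive (f h : ℝ → ℝ) : ℕ → ℝ → ℝ
  | 0 => h
  | k + 1 => fun u => ∫ w in (0:ℝ)..u, f w * iteratedPrimitive f h k w

section IteratedPrimitive

variable {f h : ℝ → ℝ}

theorem continuous_iteratedPrimitive (hf : Continuous f) (hh : Continuous h) :
    ∀ k, Continuous (iteratedPrimitive f h k)
  | 0 => hh
  | k + 1 => continuous_primitive (fun _ _ =>
      (hf.mul (continuous_iteratedPrimitive hf hh k)).intervalIntegrable _ _) 0

theorem iteratedPrimitive_succ_eq (hf : Continuous f) (hh : Continuous h) (k : ℕ) (u : ℝ) :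
    iteratedPrimitive f h (k + 1) u
      = (∫ w in (0:ℝ)..u, f w * h w * (∫ s in w..u, f s) ^ k) / k.factorial := by
  set P := fun x => ∫ s in (0:ℝ)..x, f s
  have hP : ∀ x, HasDerivAt P (f x) x := fun x => (hf.integral_hasStrictDerivAt 0 x).hasDerivAt
  have hsub : ∀ w x, ∫ s in w..x, f s = P x - P w := fun w x =>
    (integral_interval_sub_left (hf.intervalIntegrable _ _) (hf.intervalIntegrable _ _)).symm
  simp_rw [hsub]
  induction k generalizing u with
  | zero => simp [iteratedPrimitive]
  | succ k ih =>
    simp_rw [iteratedPrimitive] at ih ⊢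
    simp_rw [ih, mul_div_assoc', integral_div,
      integral_mul_integral_mul_sub_pow (φ := fun w => f w * h w) hP hf (hf.mul hh),
      Nat.factorial_succ]
    push_cast
    field_simp

theorem eq_sum_iteratedPrimitive {F G : ℝ → ℝ} {c : ℝ} {S : ℕ → ℝ → ℝ → ℝ}
    (hF : Continuous F) (hG : Continuous G) (hh : Continuous h)
    (hS0 : ∀ u v, S 0 u v = h u)
    (hSn : ∀ n u v, S (n + 1) u v =
      h u + c * ∫ u' in (0:ℝ)..u, F u' * ∫ v' in (0:ℝ)..v, G v' * S n u' v') (n : ℕ) (u v : ℝ) :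
    S n u v = ∑ k ∈ range (n + 1),
      c ^ k * iteratedPrimitive F h k u * iteratedPrimitive G 1 k v := by
  induction n generalizing u v with
  | zero => simp [hS0, iteratedPrimitive]
  | succ n ih =>
    simp_rw [hSn, ih]
    rw [integral_mul_integral_mul_sum_mul _ hF hG
      (α := fun k x => c ^ k * iteratedPrimitive F h k x) (β := iteratedPrimitive G 1)
      (fun k _ => continuous_const.mul (continuous_iteratedPrimitive hF hh k))
      (fun k _ => continuous_iteratedPrimitive hG continuous_const k)]
    conv_rhs => rw [sum_range_succ', add_comm]
    rw [mul_sum]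
    congr 1
    · simp [iteratedPrimitive]
    · refine sum_congr rfl fun k _ => ?_
      simp_rw [iteratedPrimitive, mul_left_comm (F _), integral_const_mul]
      ring

end IteratedPrimitive

theorem stmt7_general (μ hbar : ℝ)
    (F G : ℝ → ℝ) (hF : Continuous F) (hG : Continuous G)
    (S : ℕ → ℝ → ℝ → ℝ)
    (hS0 : ∀ u v : ℝ, S 0 u v = u / 4)
    (hSn : ∀ (n : ℕ) (u v : ℝ), S (n + 1) u v =
      u / 4 + μ / (2 * hbar ^ 2) *
        ∫ u' in (0:ℝ)..u, F u' * ∫ v' in (0:ℝ)..v, G v' * S n u' v') :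
    ∀ n : ℕ, 1 ≤ n → ∀ u v : ℝ,
      S n u v = u / 4 + ∑ k ∈ Finset.Icc 1 n,
        (μ / (2 * hbar ^ 2)) ^ k * (1 / ((k - 1).factorial : ℝ) ^ 2) *
          (∫ v' in (0:ℝ)..v, G v' * (∫ s in v'..v, G s) ^ (k - 1)) *
          (∫ u' in (0:ℝ)..u, F u' * (u' / 4) * (∫ s in u'..u, F s) ^ (k - 1)) := by
  intro n _ u v
  have hquarter : Continuous fun x : ℝ => x / 4 := continuous_id.div_const 4
  have hshift : ∀ g : ℕ → ℝ, ∑ k ∈ Icc 1 n, g k = ∑ k ∈ range n, g (k + 1) := fun g => by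
    rw [range_eq_Ico, sum_Ico_add' g 0 n 1]; rfl
  rw [eq_sum_iteratedPrimitive hF hG hquarter hS0 hSn, sum_range_succ', add_comm, hshift]
  congr 1
  · simp [iteratedPrimitive]
  refine sum_congr rfl fun k _ => ?_
  rw [iteratedPrimitive_succ_eq hF hquarter,
    iteratedPrimitive_succ_eq (h := 1) hG continuous_const]
  simp only [Nat.add_sub_cancel, Pi.one_apply, mul_one]
  field_simp

theorem stmt7 (μ hbar : ℝ) (hμ : 0 < μ) (hhbar : 0 < hbar)
    (F G : ℝ → ℝ) (hF : Continuous F) (hG : Continuous G)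
    (S : ℕ → ℝ → ℝ → ℝ)
    (hS0 : ∀ u v : ℝ, S 0 u v = u / 4)
    (hSn : ∀ (n : ℕ) (u v : ℝ), S (n + 1) u v =
      u / 4 + μ / (2 * hbar ^ 2) *
        ∫ u' in (0:ℝ)..u, F u' * ∫ v' in (0:ℝ)..v, G v' * S n u' v') :
    ∀ n : ℕ, 1 ≤ n → ∀ u v : ℝ,
      S n u v = u / 4 + ∑ k ∈ Finset.Icc 1 n,
        (μ / (2 * hbar ^ 2)) ^ k * (1 / ((k - 1).factorial : ℝ) ^ 2) *
          (∫ v' in (0:ℝ)..v, G v' * (∫ s in v'..v, G s) ^ (k - 1)) *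
          (∫ u' in (0:ℝ)..u, F u' * (u' / 4) * (∫ s in u'..u, F s) ^ (k - 1)) :=
  stmt7_general μ hbar F G hF hG S hS0 hSn
end

section
/- Let μ > 0 and ℏ > 0 be real constants and let F, G : ℝ → ℝ be continuous. Define Sⁿ recursively by S⁰(u,v) = u/4 and Sⁿ(u,v) = u/4 + (μ/(2ℏ²)) ∫_0^u F(u') (∫_0^v G(v')·S^{n−1}(u',v') dv') du'. Then for all real u, v the sequence Sⁿ(u,v) converges as n → ∞ to T_S(u,v), where T_S(u,v) = u/4 + (μ/(2ℏ²)) ∫_0^v G(v') (∫_0^u F(u')·(u'/4)·₀F₁(;1; (μ/(2ℏ²))·G̃(v,v')·F̃(u,u')) du') dv'. -/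
/-!
The recursion is the Picard iteration `Sⁿ⁺¹ = q + c·(V_F ⊗ V_G) Sⁿ` with `q u = u/4` and
`c = μ/(2ℏ²)`, where `V_K h x = ∫₀ˣ K h`. As `V_F ⊗ V_G` acts factorwise on products,
`Sⁿ(u,v) = Σ_{k ≤ n} cᵏ (V_Fᵏ q)(u) (V_Gᵏ 1)(v)`. Cauchy's formula for repeated integration,
`V_K^{k+1} h (x) = (1/k!) ∫₀ˣ K(s) h(s) (∫ₛˣ K)ᵏ ds`, turns the `k`-th term into `cᵏ/(k!)²` times
two such integrals, and these are exactly the terms obtained by expanding `₀F₁` in the limit and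
exchanging sum and integrals (dominated convergence, the terms being bounded by `C Mᵏ/(k!)²`).
-/

/-- The confluent hypergeometric limit function ₀F₁(;1;z) = Σ_{n=0}^∞ zⁿ/(n!)². -/
noncomputable def hyp0F1one (z : ℝ) : ℝ := ∑' n : ℕ, z ^ n / ((n.factorial : ℝ)) ^ 2

open intervalIntegral Filter Finset Nat

noncomputable def volterra (K h : ℝ → ℝ) (x : ℝ) : ℝ := ∫ s in (0:ℝ)..x, K s * h s

noncomputable def repeatedIntegral (K g : ℝ → ℝ) (k : ℕ) (x : ℝ) : ℝ :=
  ∫ s in (0:ℝ)..x, g s * (∫ t in s..x, K t) ^ k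

section Volterra

variable {K g h : ℝ → ℝ}

theorem continuous_integral_left (hK : Continuous K) (y : ℝ) :
    Continuous fun x => ∫ t in x..y, K t :=
  (continuous_primitive (fun a b => hK.intervalIntegrable a b) y).neg.congr fun x =>
    (integral_symm y x).symm

theorem hasDerivAt_volterra (hK : Continuous K) (hh : Continuous h) (x : ℝ) :
    HasDerivAt (volterra K h) (K x * h x) x :=
  ((hK.mul hh).integral_hasStrictDerivAt 0 x).hasDerivAt

theorem continuous_volterra (hK : Continuous K) (hh : Continuous h) :
    Continuous (volterra K h) :=
  continuous_iff_continuousAt.2 fun x => (hasDerivAt_volterra hK hh x).continuousAt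

theorem continuous_volterra_iterate (hK : Continuous K) (hh : Continuous h) (k : ℕ) :
    Continuous ((volterra K)^[k] h) := by
  induction k with
  | zero => exact hh
  | succ k ih =>
    rw [Function.iterate_succ_apply']
    exact continuous_volterra hK ih

theorem repeatedIntegral_succ (hK : Continuous K) (hg : Continuous g) (k : ℕ) (x : ℝ) :
    repeatedIntegral K g (k + 1) x =
      (∫ t in (0:ℝ)..x, K t) * repeatedIntegral K g k x
        - repeatedIntegral K (fun s => g s * ∫ t in (0:ℝ)..s, K t) k x := by
  have hsplit : ∀ s, ∫ t in s..x, K t = (∫ t in (0:ℝ)..x, K t) - ∫ t in (0:ℝ)..s, K t :=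
    fun s => (integral_interval_sub_left (hK.intervalIntegrable _ _)
      (hK.intervalIntegrable _ _)).symm
  have hcont : Continuous fun s => (∫ t in s..x, K t) ^ k :=
    (continuous_integral_left hK x).pow k
  unfold repeatedIntegral
  rw [← integral_const_mul, ← integral_sub]
  · congr 1 with s
    rw [pow_succ, hsplit s]
    ring
  · exact ((hg.mul hcont).const_mul _).intervalIntegrable _ _
  · exact ((hg.mul (continuous_primitive (fun a b => hK.intervalIntegrable a b) 0)).mul
      hcont).intervalIntegrable _ _

theorem repeatedIntegral_zero_apply (K g : ℝ → ℝ) (x : ℝ) :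
    repeatedIntegral K g 0 x = ∫ s in (0:ℝ)..x, g s := by
  simp only [repeatedIntegral, pow_zero, mul_one]

theorem hasDerivAt_repeatedIntegral_zero (hg : Continuous g) (x : ℝ) :
    HasDerivAt (repeatedIntegral K g 0) (g x) x := by
  simpa only [← repeatedIntegral_zero_apply K] using (hg.integral_hasStrictDerivAt 0 x).hasDerivAt

theorem hasDerivAt_repeatedIntegral_succ (hK : Continuous K) (k : ℕ) (hg : Continuous g) (x : ℝ) :
    HasDerivAt (repeatedIntegral K g (k + 1)) ((k + 1) * (K x * repeatedIntegral K g k x)) x := by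
  have hP : Continuous fun s => ∫ t in (0:ℝ)..s, K t :=
    continuous_primitive (fun a b => hK.intervalIntegrable a b) 0
  have hPd : HasDerivAt (fun s => ∫ t in (0:ℝ)..s, K t) (K x) x :=
    (hK.integral_hasStrictDerivAt 0 x).hasDerivAt
  -- `repeatedIntegral_succ` lowers `k` at the cost of changing the weight, so induct for all `g`.
  induction k generalizing g with
  | zero =>
    rw [funext (repeatedIntegral_succ hK hg 0)]
    refine ((hPd.mul (hasDerivAt_repeatedIntegral_zero hg x)).sub
      (hasDerivAt_repeatedIntegral_zero (hg.fun_mul hP) x)).congr_deriv ?_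
    ring
  | succ k ih =>
    rw [funext (repeatedIntegral_succ hK hg (k + 1))]
    refine ((hPd.mul (ih hg)).sub (ih (hg.fun_mul hP))).congr_deriv ?_
    rw [repeatedIntegral_succ hK hg k x]
    push_cast
    ring

theorem continuous_repeatedIntegral (hK : Continuous K) (hg : Continuous g) (k : ℕ) :
    Continuous (repeatedIntegral K g k) := by
  refine continuous_iff_continuousAt.2 fun x => ?_
  cases k with
  | zero => exact (hasDerivAt_repeatedIntegral_zero hg x).continuousAt
  | succ k => exact (hasDerivAt_repeatedIntegral_succ hK k hg x).continuousAt

theorem repeatedIntegral_apply_zero (K g : ℝ → ℝ) (k : ℕ) : repeatedIntegral K g k 0 = 0 :=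
  integral_same

theorem integral_mul_repeatedIntegral (hK : Continuous K) (hg : Continuous g) (k : ℕ) (x : ℝ) :
    ∫ t in (0:ℝ)..x, K t * repeatedIntegral K g k t = repeatedIntegral K g (k + 1) x / (k + 1) := by
  rw [eq_div_iff (by positivity), mul_comm, ← integral_const_mul,
    integral_eq_sub_of_hasDerivAt (fun t _ => hasDerivAt_repeatedIntegral_succ hK k hg t)
      (((hK.mul (continuous_repeatedIntegral hK hg k)).const_mul _).intervalIntegrable _ _),
    repeatedIntegral_apply_zero, sub_zero]

/-- Cauchy's formula for repeated integration, with the measure `K t dt`. -/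
theorem volterra_iterate_succ (hK : Continuous K) (hh : Continuous h) (k : ℕ) (x : ℝ) :
    (volterra K)^[k + 1] h x = repeatedIntegral K (fun s => K s * h s) k x / k ! := by
  induction k generalizing x with
  | zero => simp [volterra, repeatedIntegral_zero_apply]
  | succ k ih =>
    rw [Function.iterate_succ_apply', volterra, funext ih]
    simp only [mul_div_assoc', integral_div]
    rw [integral_mul_repeatedIntegral hK (hK.fun_mul hh), factorial_succ]
    push_cast
    rw [div_div, mul_comm]

theorem summable_pow_div_factorial_sq (x : ℝ) : Summable fun k : ℕ => x ^ k / (k ! : ℝ) ^ 2 := by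
  refine (Real.summable_pow_div_factorial |x|).of_norm_bounded fun k => ?_
  have hk : (1 : ℝ) ≤ k ! := by exact_mod_cast k.factorial_pos
  rw [norm_div, norm_pow, Real.norm_eq_abs, norm_pow, Real.norm_natCast]
  exact div_le_div_of_nonneg_left (by positivity) (by positivity) (le_self_pow₀ hk two_ne_zero)

theorem hasSum_hyp0F1one (z : ℝ) :
    HasSum (fun k : ℕ => z ^ k / (k ! : ℝ) ^ 2) (hyp0F1one z) :=
  (summable_pow_div_factorial_sq z).hasSum

theorem exists_norm_le_on_uIcc {f : ℝ → ℝ} (hf : Continuous f) (a b : ℝ) :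
    ∃ C, 0 ≤ C ∧ ∀ x ∈ Set.uIcc a b, ‖f x‖ ≤ C := by
  obtain ⟨C, hC⟩ := isCompact_uIcc.exists_bound_of_continuousOn hf.continuousOn
  exact ⟨C, (norm_nonneg _).trans (hC a Set.left_mem_uIcc), hC⟩

theorem exists_abs_repeatedIntegral_le (hK : Continuous K) (hg : Continuous g) (y : ℝ) :
    ∃ C M : ℝ, ∀ k, |repeatedIntegral K g k y| ≤ C * M ^ k := by
  obtain ⟨B, hB0, hB⟩ := exists_norm_le_on_uIcc hg 0 y
  obtain ⟨M, -, hM⟩ := exists_norm_le_on_uIcc (continuous_integral_left hK y) 0 y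
  refine ⟨B * |y|, M, fun k => ?_⟩
  have hbound : ∀ s ∈ Set.uIoc (0:ℝ) y, ‖g s * (∫ t in s..y, K t) ^ k‖ ≤ B * M ^ k := by
    intro s hs
    have hs' := Set.uIoc_subset_uIcc hs
    rw [norm_mul, norm_pow]
    exact mul_le_mul (hB s hs') (pow_le_pow_left₀ (norm_nonneg _) (hM s hs') k)
      (by positivity) hB0
  calc |repeatedIntegral K g k y| ≤ B * M ^ k * |y - 0| := norm_integral_le_of_norm_le_const hbound
    _ = B * |y| * M ^ k := by rw [sub_zero]; ring

theorem hasSum_mul_repeatedIntegral {f : ℝ → ℝ} (hK : Continuous K) (hg : Continuous g)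
    {b : ℕ → ℝ} {C M : ℝ} (hb : ∀ k, |b k| ≤ C * M ^ k) (z y : ℝ)
    (hf : ∀ t, HasSum (fun k => (z * ∫ s in t..y, K s) ^ k / (k ! : ℝ) ^ 2 * b k) (f t)) :
    HasSum (fun k => z ^ k / (k ! : ℝ) ^ 2 * b k * repeatedIntegral K g k y)
      (∫ t in (0:ℝ)..y, g t * f t) := by
  obtain ⟨B, hB0, hB⟩ := exists_norm_le_on_uIcc hg 0 y
  obtain ⟨D, hD0, hD⟩ := exists_norm_le_on_uIcc
    ((continuous_integral_left hK y).const_mul z) 0 y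
  have hterm : ∀ k, (∫ t in (0:ℝ)..y, g t * ((z * ∫ s in t..y, K s) ^ k / (k ! : ℝ) ^ 2 * b k))
      = z ^ k / (k ! : ℝ) ^ 2 * b k * repeatedIntegral K g k y := fun k => by
    rw [repeatedIntegral, ← integral_const_mul]
    congr 1 with t
    ring
  simp only [← hterm]
  refine hasSum_integral_of_dominated_convergence
    (fun k _ => B * C * ((D * M) ^ k / (k ! : ℝ) ^ 2)) (fun k => ?_) (fun k => ?_) ?_
    intervalIntegrable_const (Eventually.of_forall fun t _ => (hf t).mul_left (g t))
  · exact (hg.mul (((continuous_const.mul (continuous_integral_left hK y)).pow k).div_const _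
      |>.mul continuous_const)).aestronglyMeasurable
  · refine Eventually.of_forall fun t ht => ?_
    have ht' := Set.uIoc_subset_uIcc ht
    calc ‖g t * ((z * ∫ s in t..y, K s) ^ k / (k ! : ℝ) ^ 2 * b k)‖
        = ‖g t‖ * (‖z * ∫ s in t..y, K s‖ ^ k / (k ! : ℝ) ^ 2 * |b k|) := by
          rw [norm_mul, norm_mul, norm_div, norm_pow, norm_pow, Real.norm_natCast,
            Real.norm_eq_abs (b k)]
      _ ≤ B * (D ^ k / (k ! : ℝ) ^ 2 * (C * M ^ k)) := by
          gcongr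
          exacts [hB t ht', hD t ht', hb k]
      _ = B * C * ((D * M) ^ k / (k ! : ℝ) ^ 2) := by ring
  · exact Eventually.of_forall fun t _ => (summable_pow_div_factorial_sq (D * M)).mul_left (B * C)

theorem hasSum_integral_integral_hyp0F1one {F G w g : ℝ → ℝ} (hF : Continuous F)
    (hG : Continuous G) (hw : Continuous w) (hg : Continuous g) (c u v : ℝ) :
    HasSum (fun k => c ^ k / (k ! : ℝ) ^ 2 * repeatedIntegral F w k u * repeatedIntegral G g k v)
      (∫ v' in (0:ℝ)..v, g v' * ∫ u' in (0:ℝ)..u, w u' *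
        hyp0F1one (c * (∫ s in v'..v, G s) * ∫ s in u'..u, F s)) := by
  obtain ⟨C, M, hCM⟩ := exists_abs_repeatedIntegral_le hF hw u
  refine hasSum_mul_repeatedIntegral hG hg hCM c v fun v' => ?_
  simpa only [mul_one] using hasSum_mul_repeatedIntegral hF hw (b := fun _ => 1) (C := 1) (M := 1)
    (by simp) (c * ∫ s in v'..v, G s) u fun u' => by
      simpa only [mul_one] using hasSum_hyp0F1one (c * (∫ s in v'..v, G s) * ∫ s in u'..u, F s)

theorem integral_mul_sum_mul_s8 (hK : Continuous K) {f : ℕ → ℝ → ℝ} (hf : ∀ k, Continuous (f k))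
    (b : ℕ → ℝ) (s : Finset ℕ) (x : ℝ) :
    ∫ t in (0:ℝ)..x, K t * ∑ k ∈ s, b k * f k t = ∑ k ∈ s, b k * volterra K (f k) x := by
  simp_rw [mul_sum]
  rw [integral_finsetSum fun k _ =>
    (hK.fun_mul ((hf k).const_mul (b k))).intervalIntegrable _ _]
  refine sum_congr rfl fun k _ => ?_
  rw [volterra, ← integral_const_mul]
  congr 1 with t
  ring

theorem eq_sum_volterra_iterate {F G h : ℝ → ℝ} (hF : Continuous F) (hG : Continuous G)
    (hh : Continuous h) (c : ℝ) (S : ℕ → ℝ → ℝ → ℝ) (hS0 : ∀ u v, S 0 u v = h u)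
    (hSn : ∀ n u v, S (n + 1) u v =
      h u + c * ∫ u' in (0:ℝ)..u, F u' * ∫ v' in (0:ℝ)..v, G v' * S n u' v')
    (n : ℕ) (u v : ℝ) :
    S n u v = ∑ k ∈ range (n + 1), c ^ k * (volterra F)^[k] h u * (volterra G)^[k] 1 v := by
  induction n generalizing u v with
  | zero => simp [hS0]
  | succ n ih =>
    have hinner : ∀ u', ∫ v' in (0:ℝ)..v, G v' * S n u' v' =
        ∑ k ∈ range (n + 1), c ^ k * (volterra G)^[k + 1] 1 v * (volterra F)^[k] h u' := by
      intro u'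
      simp_rw [ih u', Function.iterate_succ_apply']
      rw [integral_mul_sum_mul_s8 hG (continuous_volterra_iterate hG continuous_one)]
      exact sum_congr rfl fun k _ => by ring
    simp_rw [hSn, hinner, integral_mul_sum_mul_s8 hF (continuous_volterra_iterate hF hh),
      sum_range_succ' _ (n + 1), mul_sum, Function.iterate_succ_apply']
    rw [add_comm]
    congr 1
    · exact sum_congr rfl fun k _ => by ring
    · simp

theorem hasSum_volterra_iterate_mul {F G h : ℝ → ℝ} (hF : Continuous F) (hG : Continuous G)
    (hh : Continuous h) (c u v : ℝ) :
    HasSum (fun k => c ^ k * (volterra F)^[k] h u * (volterra G)^[k] 1 v)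
      (h u + c * ∫ v' in (0:ℝ)..v, G v' * ∫ u' in (0:ℝ)..u, F u' * h u' *
        hyp0F1one (c * (∫ s in v'..v, G s) * ∫ s in u'..u, F s)) := by
  rw [← hasSum_nat_add_iff' 1, sum_range_one]
  have hterm : (fun k => c ^ (k + 1) * (volterra F)^[k + 1] h u * (volterra G)^[k + 1] 1 v) =
      fun k => c * (c ^ k / (k ! : ℝ) ^ 2 * repeatedIntegral F (fun s => F s * h s) k u *
        repeatedIntegral G G k v) := by
    ext k
    rw [volterra_iterate_succ hF hh, volterra_iterate_succ hG continuous_one]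
    simp only [Pi.one_apply, mul_one]
    field_simp
    ring
  rw [hterm]
  simpa using (hasSum_integral_integral_hyp0F1one hF hG (hF.fun_mul hh) hG c u v).mul_left c

end Volterra

theorem stmt8_general (μ hbar : ℝ)
    (F G : ℝ → ℝ) (hF : Continuous F) (hG : Continuous G)
    (S : ℕ → ℝ → ℝ → ℝ)
    (hS0 : ∀ u v : ℝ, S 0 u v = u / 4)
    (hSn : ∀ (n : ℕ) (u v : ℝ), S (n + 1) u v =
      u / 4 + μ / (2 * hbar ^ 2) *
        ∫ u' in (0:ℝ)..u, F u' * ∫ v' in (0:ℝ)..v, G v' * S n u' v') :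
    ∀ u v : ℝ,
      Filter.Tendsto (fun n : ℕ => S n u v) Filter.atTop
        (nhds (u / 4 + μ / (2 * hbar ^ 2) *
          ∫ v' in (0:ℝ)..v, G v' *
            ∫ u' in (0:ℝ)..u, F u' * (u' / 4) *
              hyp0F1one (μ / (2 * hbar ^ 2) * (∫ s in v'..v, G s) *
                (∫ s in u'..u, F s)))) := by
  intro u v
  have hq : Continuous fun x : ℝ => x / 4 := continuous_id.div_const 4
  rw [funext fun n => eq_sum_volterra_iterate hF hG hq _ S hS0 hSn n u v]
  exact ((hasSum_volterra_iterate_mul hF hG hq _ u v).tendsto_sum_nat).comp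
    (tendsto_add_atTop_nat 1)

theorem stmt8 (μ hbar : ℝ) (hμ : 0 < μ) (hhbar : 0 < hbar)
    (F G : ℝ → ℝ) (hF : Continuous F) (hG : Continuous G)
    (S : ℕ → ℝ → ℝ → ℝ)
    (hS0 : ∀ u v : ℝ, S 0 u v = u / 4)
    (hSn : ∀ (n : ℕ) (u v : ℝ), S (n + 1) u v =
      u / 4 + μ / (2 * hbar ^ 2) *
        ∫ u' in (0:ℝ)..u, F u' * ∫ v' in (0:ℝ)..v, G v' * S n u' v') :
    ∀ u v : ℝ,
      Filter.Tendsto (fun n : ℕ => S n u v) Filter.atTop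
        (nhds (u / 4 + μ / (2 * hbar ^ 2) *
          ∫ v' in (0:ℝ)..v, G v' *
            ∫ u' in (0:ℝ)..u, F u' * (u' / 4) *
              hyp0F1one (μ / (2 * hbar ^ 2) * (∫ s in v'..v, G s) *
                (∫ s in u'..u, F s)))) :=
  stmt8_general μ hbar F G hF hG S hS0 hSn
end

section
/- Let μ > 0 and ℏ > 0 be real constants and let F, G : ℝ → ℝ be continuous. Then for every fixed u, the function v ↦ T_S(u,v) is differentiable and its derivative equals ∂T_S/∂v (u,v) = G(v)·(μ/(2ℏ²))·∫_0^u F(u')·(u'/4) du' + G(v)·(μ/(2ℏ²))² · ∫_0^v G(v') (∫_0^u F(u')·(u'/4)·F̃(u,u')·₀F₁(;2; (μ/(2ℏ²))·G̃(v,v')·F̃(u,u')) du') dv', where ₀F₁(;2;z) = Σ_{n=0}^∞ zⁿ/(n!·(n+1)!). -/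
/-- The confluent hypergeometric limit function ₀F₁(;2;z) = Σ_{n=0}^∞ zⁿ/(n!·(n+1)!). -/
noncomputable def hyp0F1two (z : ℝ) : ℝ :=
  ∑' n : ℕ, z ^ n / ((n.factorial : ℝ) * ((n + 1).factorial : ℝ))

/-- The time kernel factor T_S(u,v). -/
noncomputable def TS (μ hbar : ℝ) (F G : ℝ → ℝ) (u v : ℝ) : ℝ :=
  u / 4 + μ / (2 * hbar ^ 2) *
    ∫ v' in (0:ℝ)..v, G v' *
      ∫ u' in (0:ℝ)..u, F u' * (u' / 4) *
        hyp0F1one (μ / (2 * hbar ^ 2) * (∫ s in v'..v, G s) * (∫ s in u'..u, F s))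

open intervalIntegral Set Nat

theorem summable_mul_pow_of_summable_abs {a : ℕ → ℝ} {R : ℝ}
    (ha : Summable fun n => |a n| * R ^ n) {w : ℝ} (hw : |w| ≤ R) :
    Summable fun n => a n * w ^ n :=
  ha.of_norm_bounded fun n => by
    rw [Real.norm_eq_abs, abs_mul, abs_pow]
    gcongr

theorem hasDerivAt_tsum_mul_pow {a : ℕ → ℝ} (ha : ∀ R, Summable fun n => |a n| * R ^ n)
    (z : ℝ) :
    HasDerivAt (fun y => ∑' n, a n * y ^ n) (∑' n, (n + 1) * a (n + 1) * z ^ n) z := by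
  set R := |z| + 1
  have hR : 1 ≤ R := le_add_of_nonneg_left (abs_nonneg z)
  have hz : z ∈ Metric.ball (0 : ℝ) R := by simp [R]
  have hbound : ∀ n, ∀ y ∈ Metric.ball (0 : ℝ) R,
      ‖a n * (n * y ^ (n - 1))‖ ≤ |a n| * (2 * R) ^ n := by
    intro n y hy
    have hyR : |y| ≤ R := by simpa using (mem_ball_zero_iff.mp hy).le
    have hn : (n : ℝ) ≤ 2 ^ n := by exact_mod_cast n.lt_two_pow_self.le
    rw [Real.norm_eq_abs, abs_mul, abs_mul, abs_pow, Nat.abs_cast, mul_pow]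
    gcongr
    calc |y| ^ (n - 1) ≤ R ^ (n - 1) := by gcongr
      _ ≤ R ^ n := pow_le_pow_right₀ hR (n.sub_le 1)
  have hderiv := hasDerivAt_tsum_of_isPreconnected (ha (2 * R)) Metric.isOpen_ball
    (convex_ball 0 R).isPreconnected (fun n y _ => (hasDerivAt_pow n y).const_mul (a n))
    hbound hz (summable_mul_pow_of_summable_abs (ha R) (by simp [R])) hz
  rw [(Summable.of_norm_bounded (ha (2 * R)) (fun n => hbound n z hz)).tsum_eq_zero_add,
    cast_zero, zero_mul, mul_zero, zero_add] at hderiv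
  refine hderiv.congr_deriv (tsum_congr fun n => ?_)
  rw [Nat.add_sub_cancel, cast_succ]
  ring

theorem continuous_tsum_mul_pow {a : ℕ → ℝ} (ha : ∀ R, Summable fun n => |a n| * R ^ n) :
    Continuous fun y => ∑' n, a n * y ^ n :=
  continuous_iff_continuousAt.2 fun z => (hasDerivAt_tsum_mul_pow ha z).continuousAt

theorem summable_abs_mul_pow_of_abs_le_inv_factorial {a : ℕ → ℝ} (ha : ∀ n, |a n| ≤ 1 / n !)
    (R : ℝ) : Summable fun n => |a n| * R ^ n :=
  (Real.summable_pow_div_factorial |R|).of_norm_bounded fun n => by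
    rw [Real.norm_eq_abs, abs_mul, abs_abs, abs_pow, div_eq_mul_one_div, mul_comm]
    gcongr
    exact ha n

theorem abs_one_div_le_inv_factorial {d : ℕ → ℝ} (hd : ∀ n, (n ! : ℝ) ≤ d n) (n : ℕ) :
    |1 / d n| ≤ 1 / n ! := by
  have : (0 : ℝ) < n ! := by positivity
  rw [abs_of_pos (one_div_pos.2 (this.trans_le (hd n)))]
  gcongr
  exact hd n

theorem hyp0F1one_eq_tsum : hyp0F1one = fun y => ∑' n : ℕ, 1 / (n ! : ℝ) ^ 2 * y ^ n :=
  funext fun y => tsum_congr fun n => by ring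

theorem hyp0F1two_eq_tsum :
    hyp0F1two = fun y => ∑' n : ℕ, 1 / ((n ! : ℝ) * (n + 1)! ) * y ^ n :=
  funext fun y => tsum_congr fun n => by ring

theorem factorial_le_factorial_sq (n : ℕ) : (n ! : ℝ) ≤ (n ! : ℝ) ^ 2 := by
  have : (1 : ℝ) ≤ n ! := by exact_mod_cast n.factorial_pos
  nlinarith

theorem factorial_le_factorial_mul_factorial_succ (n : ℕ) : (n ! : ℝ) ≤ n ! * (n + 1)! := by
  have : (1 : ℝ) ≤ (n + 1)! := by exact_mod_cast (n + 1).factorial_pos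
  nlinarith [(by positivity : (0 : ℝ) ≤ n !)]

theorem hasDerivAt_hyp0F1one (z : ℝ) : HasDerivAt hyp0F1one (hyp0F1two z) z := by
  have h := hasDerivAt_tsum_mul_pow (summable_abs_mul_pow_of_abs_le_inv_factorial
    (abs_one_div_le_inv_factorial factorial_le_factorial_sq)) z
  rw [← hyp0F1one_eq_tsum] at h
  convert h using 1
  refine tsum_congr fun n => ?_
  rw [factorial_succ, cast_mul]
  field_simp
  push_cast
  ring

@[fun_prop]
theorem continuous_hyp0F1one : Continuous hyp0F1one :=
  continuous_iff_continuousAt.2 fun z => (hasDerivAt_hyp0F1one z).continuousAt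

@[fun_prop]
theorem continuous_hyp0F1two : Continuous hyp0F1two := by
  rw [hyp0F1two_eq_tsum]
  exact continuous_tsum_mul_pow (summable_abs_mul_pow_of_abs_le_inv_factorial
    (abs_one_div_le_inv_factorial factorial_le_factorial_mul_factorial_succ))

theorem hyp0F1one_zero : hyp0F1one 0 = 1 := by
  rw [hyp0F1one, tsum_eq_single 0 fun n hn => by simp [hn]]
  simp

theorem hasDerivAt_intervalIntegral_of_continuous {E : Type*} [NormedAddCommGroup E]
    [NormedSpace ℝ E] {f f' : ℝ → ℝ → E} (hf : Continuous (Function.uncurry f))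
    (hf' : Continuous (Function.uncurry f')) (hderiv : ∀ t x, HasDerivAt (f · x) (f' t x) t)
    (a b t₀ : ℝ) :
    HasDerivAt (fun t => ∫ x in a..b, f t x) (∫ x in a..b, f' t₀ x) t₀ := by
  obtain ⟨C, hC⟩ :=
    ((isCompact_closedBall t₀ 1).prod isCompact_uIcc).exists_bound_of_continuousOn
      hf'.continuousOn
  exact (hasDerivAt_integral_of_dominated_loc_of_deriv_le (bound := fun _ => C)
    (Metric.ball_mem_nhds t₀ one_pos)
    (.of_forall fun t => (hf.uncurry_left t).aestronglyMeasurable)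
    ((hf.uncurry_left t₀).intervalIntegrable a b) (hf'.uncurry_left t₀).aestronglyMeasurable
    (MeasureTheory.ae_of_all _ fun x hx t ht =>
      hC (t, x) ⟨Metric.ball_subset_closedBall ht, uIoc_subset_uIcc (a := a) hx⟩)
    intervalIntegrable_const (MeasureTheory.ae_of_all _ fun x _ t _ => hderiv t x)).2

theorem integral_mul_comp_tail_integral {G κ : ℝ → ℝ} (hG : Continuous G) (hκ : Continuous κ)
    (a b : ℝ) :
    ∫ r in a..b, G r * κ (∫ s in r..b, G s) = ∫ t in (0 : ℝ)..∫ s in a..b, G s, κ t := by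
  have htail : ∀ r, HasDerivAt (fun r => ∫ s in r..b, G s) (-G r) r := fun r =>
    integral_hasDerivAt_left (hG.intervalIntegrable _ _) (hG.stronglyMeasurableAtFilter _ _)
      hG.continuousAt
  have hsubst :=
    integral_comp_mul_deriv (a := a) (b := b) (fun r _ => htail r) hG.neg.continuousOn hκ
  rw [integral_same] at hsubst
  calc ∫ r in a..b, G r * κ (∫ s in r..b, G s)
      = -∫ r in a..b, (κ ∘ fun r => ∫ s in r..b, G s) r * -G r := by
        rw [← integral_neg]
        exact integral_congr fun r _ => by simp only [Function.comp_apply]; ring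
    _ = ∫ t in (0 : ℝ)..∫ s in a..b, G s, κ t := by rw [hsubst, integral_symm, neg_neg]

theorem hasDerivAt_integral_mul_comp_tail_integral {G κ : ℝ → ℝ} (hG : Continuous G)
    (hκ : Continuous κ) (a v : ℝ) :
    HasDerivAt (fun w => ∫ r in a..w, G r * κ (∫ s in r..w, G s))
      (κ (∫ s in a..v, G s) * G v) v := by
  simp only [integral_mul_comp_tail_integral hG hκ]
  exact (hκ.integral_hasStrictDerivAt 0 _).hasDerivAt.comp v
    (hG.integral_hasStrictDerivAt a v).hasDerivAt

theorem hasDerivAt_integral_mul_hyp0F1one {p q : ℝ → ℝ} (hp : Continuous p) (hq : Continuous q)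
    (a b c t : ℝ) :
    HasDerivAt (fun t => ∫ x in a..b, p x * hyp0F1one (c * t * q x))
      (c * ∫ x in a..b, p x * q x * hyp0F1two (c * t * q x)) t := by
  rw [← integral_const_mul]
  refine hasDerivAt_intervalIntegral_of_continuous
    (f := fun t x => p x * hyp0F1one (c * t * q x))
    (f' := fun t x => c * (p x * q x * hyp0F1two (c * t * q x))) (by fun_prop) (by fun_prop)
    (fun t x => ?_) a b t
  have hinner : HasDerivAt (fun t => c * t * q x) (c * q x) t := by
    simpa using ((hasDerivAt_id t).const_mul c).mul_const (q x)
  exact (((hasDerivAt_hyp0F1one _).comp t hinner).const_mul (p x)).congr_deriv (by ring)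

theorem stmt11_general (μ hbar : ℝ)
    (F G : ℝ → ℝ) (hF : Continuous F) (hG : Continuous G) :
    ∀ u v : ℝ,
      HasDerivAt (fun w : ℝ => TS μ hbar F G u w)
        (G v * (μ / (2 * hbar ^ 2)) * (∫ u' in (0:ℝ)..u, F u' * (u' / 4)) +
          G v * (μ / (2 * hbar ^ 2)) ^ 2 *
            ∫ v' in (0:ℝ)..v, G v' *
              ∫ u' in (0:ℝ)..u, F u' * (u' / 4) * (∫ s in u'..u, F s) *
                hyp0F1two (μ / (2 * hbar ^ 2) * (∫ s in v'..v, G s) *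
                  (∫ s in u'..u, F s))) v := by
  intro u v
  set c := μ / (2 * hbar ^ 2)
  set κ : ℝ → ℝ := fun t => ∫ x in (0:ℝ)..u,
    F x * (x / 4) * hyp0F1one (c * t * ∫ s in x..u, F s)
  set κ₂ : ℝ → ℝ := fun t => ∫ x in (0:ℝ)..u,
    F x * (x / 4) * (∫ s in x..u, F s) * hyp0F1two (c * t * ∫ s in x..u, F s)
  have htail : Continuous fun x => ∫ s in x..u, F s := by
    simp_rw [integral_symm u]
    fun_prop
  have hκ : ∀ t, HasDerivAt κ (c * κ₂ t) t :=
    hasDerivAt_integral_mul_hyp0F1one (by fun_prop) htail 0 u c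
  have hκc : Continuous κ := continuous_iff_continuousAt.2 fun t => (hκ t).continuousAt
  have hκ₂c : Continuous κ₂ := by fun_prop
  have hκ0 : κ 0 = ∫ x in (0:ℝ)..u, F x * (x / 4) := by simp [κ, hyp0F1one_zero]
  have hκ₂ :
      c * ∫ r in (0:ℝ)..v, G r * κ₂ (∫ s in r..v, G s) = κ (∫ s in 0..v, G s) - κ 0 := by
    rw [integral_mul_comp_tail_integral hG hκ₂c, ← integral_const_mul,
      integral_eq_sub_of_hasDerivAt (fun t _ => hκ t)
      ((continuous_const.mul hκ₂c).intervalIntegrable _ _)]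
  refine (((hasDerivAt_integral_mul_comp_tail_integral hG hκc 0 v).const_mul c).const_add
    (u / 4)).congr_deriv ?_
  rw [← hκ0]
  linear_combination (-(G v * c)) * hκ₂

theorem stmt11 (μ hbar : ℝ) (hμ : 0 < μ) (hhbar : 0 < hbar)
    (F G : ℝ → ℝ) (hF : Continuous F) (hG : Continuous G) :
    ∀ u v : ℝ,
      HasDerivAt (fun w : ℝ => TS μ hbar F G u w)
        (G v * (μ / (2 * hbar ^ 2)) * (∫ u' in (0:ℝ)..u, F u' * (u' / 4)) +
          G v * (μ / (2 * hbar ^ 2)) ^ 2 *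
            ∫ v' in (0:ℝ)..v, G v' *
              ∫ u' in (0:ℝ)..u, F u' * (u' / 4) * (∫ s in u'..u, F s) *
                hyp0F1two (μ / (2 * hbar ^ 2) * (∫ s in v'..v, G s) *
                  (∫ s in u'..u, F s))) v :=
  stmt11_general μ hbar F G hF hG
end
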